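/- Let G be a simple graph with a'(G) = η ≥ 2 and l ≥ 3. Then a'(G □ P_l) ≤ η + 2, where P_l is the path on l vertices. -/

import Mathlib

open SimpleGraph

/-- A proper edge colouring: edges sharing a vertex get distinct colours. -/
def IsProperEdgeColoring {V : Type*} (G : SimpleGraph V) {S : Type*} (c : Sym2 V → S) : Prop :=
  ∀ e₁ ∈ G.edgeSet, ∀ e₂ ∈ G.edgeSet, e₁ ≠ e₂ → (∃ x, x ∈ e₁ ∧ x ∈ e₂) → c e₁ ≠ c e₂

/-- An acyclic edge colouring: proper, and every cycle uses at least three colours. -/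
def IsAcyclicEdgeColoring {V : Type*} (G : SimpleGraph V) {S : Type*} (c : Sym2 V → S) : Prop :=
  IsProperEdgeColoring G c ∧
  ∀ (v : V) (w : G.Walk v v), w.IsCycle →
    ∃ e₁ ∈ w.edges, ∃ e₂ ∈ w.edges, ∃ e₃ ∈ w.edges,
      c e₁ ≠ c e₂ ∧ c e₁ ≠ c e₃ ∧ c e₂ ≠ c e₃

/-- The acyclic chromatic index: least number of colours in an acyclic edge colouring. -/
noncomputable def acyclicChromaticIndex {V : Type*} (G : SimpleGraph V) : ℕ :=
  sInf {n | ∃ c : Sym2 V → Fin n, IsAcyclicEdgeColoring G c}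

/-- A maximal bichromatic path with colour pair {a, b}: a path whose edges use exactly
the colours a and b, not extendable at either end within these colours. -/
def IsMaxBichromaticPath {V S : Type*} (G : SimpleGraph V) (c : Sym2 V → S)
    (a b : S) {u v : V} (w : G.Walk u v) : Prop :=
  w.IsPath ∧ a ≠ b ∧ (∀ e ∈ w.edges, c e = a ∨ c e = b) ∧
  a ∈ w.edges.map c ∧ b ∈ w.edges.map c ∧
  (∀ x, ∀ h : G.Adj x u, ¬((Walk.cons h w).IsPath ∧ (c s(x, u) = a ∨ c s(x, u) = b))) ∧
  (∀ y, ∀ h : G.Adj v y, ¬((w.concat h).IsPath ∧ (c s(v, y) = a ∨ c s(v, y) = b)))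

/-- The auxiliary graph: G plus an edge between the endpoints of every maximal
bichromatic path of the colouring c. -/
def auxGraph {V S : Type*} (G : SimpleGraph V) (c : Sym2 V → S) : SimpleGraph V where
  Adj u v := u ≠ v ∧ (G.Adj u v ∨
    ∃ a b, (∃ w : G.Walk u v, IsMaxBichromaticPath G c a b w) ∨
           (∃ w : G.Walk v u, IsMaxBichromaticPath G c a b w))
  symm := ⟨by
    rintro u v ⟨hne, h | ⟨a, b, h⟩⟩
    · exact ⟨hne.symm, Or.inl h.symm⟩
    · exact ⟨hne.symm, Or.inr ⟨a, b, h.symm⟩⟩⟩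
  loopless := ⟨fun v h => h.1 rfl⟩

/-- The number of maximal bichromatic paths having `v` as an endpoint. -/
noncomputable def maxBichromPathsAt {V S : Type*} (G : SimpleGraph V) (c : Sym2 V → S)
    (v : V) : ℕ :=
  {p : (u : V) × G.Walk v u | ∃ a b, IsMaxBichromaticPath G c a b p.2}.ncard

/-!
Let `c` be an acyclic edge colouring of `G` with `η` colours. Colour an edge of `G □ P_l` inside
the layer `k` by `c + σ k`, where the shift `σ k ∈ {0, 1}` alternates along the path, and an edge
between the layers `k` and `k + 1` by one of two new colours according to the parity of `k`.
This colouring is proper. Under an acyclic colouring, the edges of any two colours span a forest,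
so a closed walk without backtracking that uses two colours only is trivial. A bicoloured cycle
inside one layer or one column projects to such a walk in `G` or in the path. A bicoloured cycle
using both kinds of edges alternates between horizontal edges of one colour `X` and vertical
edges; consecutive horizontal edges lie in adjacent layers, so their projections to `G` have the
distinct colours `X` and `X - 1`, and the projection is again such a walk, which is absurd.
-/

open List

section EdgeColoring
variable {V S : Type*} {G : SimpleGraph V} {c : Sym2 V → S}

lemma IsProperEdgeColoring.comp (hc : IsProperEdgeColoring G c) {S' : Type*} {g : S → S'}
    (hg : Function.Injective g) : IsProperEdgeColoring G (g ∘ c) :=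
  fun e₁ h₁ e₂ h₂ hne hx => hg.ne (hc e₁ h₁ e₂ h₂ hne hx)

lemma IsAcyclicEdgeColoring.comp (hc : IsAcyclicEdgeColoring G c) {S' : Type*} {g : S → S'}
    (hg : Function.Injective g) : IsAcyclicEdgeColoring G (g ∘ c) := by
  refine ⟨hc.1.comp hg, fun v w hw => ?_⟩
  obtain ⟨e₁, h₁, e₂, h₂, e₃, h₃, h12, h13, h23⟩ := hc.2 v w hw
  exact ⟨e₁, h₁, e₂, h₂, e₃, h₃, hg.ne h12, hg.ne h13, hg.ne h23⟩

lemma IsProperEdgeColoring.isAcyclicEdgeColoring (hc : IsProperEdgeColoring G c)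
    (hG : G.IsAcyclic) : IsAcyclicEdgeColoring G c :=
  ⟨hc, fun _ w hw => (hG w hw).elim⟩

lemma IsProperEdgeColoring.isChain_ne (hc : IsProperEdgeColoring G c) :
    ∀ {u v : V} (w : G.Walk u v), IsChain (· ≠ ·) w.edges →
      IsChain (fun e e' => c e ≠ c e') w.edges
  | _, _, .nil, _ => by simp
  | _, _, .cons _ .nil, _ => by simp
  | _, _, .cons h (.cons h' w), hw => by
    rw [Walk.edges_cons, Walk.edges_cons, isChain_cons_cons] at hw ⊢
    refine ⟨hc _ h _ h' hw.1 ⟨_, Sym2.mem_mk_right _ _, Sym2.mem_mk_left _ _⟩, ?_⟩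
    simpa using hc.isChain_ne (.cons h' w) (by simpa using hw.2)

lemma IsAcyclicEdgeColoring.exists_three_of_isChain (hc : IsAcyclicEdgeColoring G c) {u : V}
    (w : G.Walk u u) (hne : ¬ w.Nil) (hw : IsChain (· ≠ ·) w.edges) :
    ∃ e₁ ∈ w.edges, ∃ e₂ ∈ w.edges, ∃ e₃ ∈ w.edges,
      c e₁ ≠ c e₂ ∧ c e₁ ≠ c e₃ ∧ c e₂ ≠ c e₃ := by
  by_contra h
  set K := G.deleteEdges {e | c e ∉ w.edges.map c}
  have hK : K.IsAcyclic := by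
    intro v z hz
    have hcol : ∀ e ∈ z.edges, ∃ f ∈ w.edges, c f = c e := fun e he => by
      have := z.edges_subset_edgeSet he
      simp only [K, edgeSet_deleteEdges, Set.mem_sdiff, Set.mem_ofPred_eq, not_not, mem_map] at this
      exact this.2
    obtain ⟨e₁, h₁, e₂, h₂, e₃, h₃, h12, h13, h23⟩ :=
      hc.2 v (z.mapLe (G.deleteEdges_le _)) (hz.mapLe _)
    rw [Walk.edges_mapLe_eq_edges] at h₁ h₂ h₃
    obtain ⟨f₁, hf₁, r₁⟩ := hcol e₁ h₁
    obtain ⟨f₂, hf₂, r₂⟩ := hcol e₂ h₂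
    obtain ⟨f₃, hf₃, r₃⟩ := hcol e₃ h₃
    exact h ⟨f₁, hf₁, f₂, hf₂, f₃, hf₃, by rwa [r₁, r₂], by rwa [r₁, r₃], by rwa [r₂, r₃]⟩
  have hwK : ∀ e ∈ w.edges, e ∈ K.edgeSet := fun e he => by
    simpa [K, edgeSet_deleteEdges, w.edges_subset_edgeSet he] using ⟨e, he, rfl⟩
  have hp : (w.transfer K hwK).IsPath :=
    (hK.isPath_iff_isChain _).mpr (by rwa [Walk.edges_transfer])
  rw [Walk.isPath_iff_nil, ← Walk.edges_eq_nil, Walk.edges_transfer, Walk.edges_eq_nil] at hp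
  exact hne hp

variable {n : ℕ}

lemma IsAcyclicEdgeColoring.acyclicChromaticIndex_le {c : Sym2 V → Fin n}
    (hc : IsAcyclicEdgeColoring G c) : acyclicChromaticIndex G ≤ n :=
  Nat.sInf_le ⟨c, hc⟩

lemma exists_isAcyclicEdgeColoring_of_acyclicChromaticIndex_eq (h : acyclicChromaticIndex G = n)
    (hn : n ≠ 0) : ∃ c : Sym2 V → Fin n, IsAcyclicEdgeColoring G c :=
  h ▸ Nat.sInf_mem (Nat.nonempty_of_pos_sInf (Nat.pos_of_ne_zero (h ▸ hn)))

end EdgeColoring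

lemma isAcyclic_pathGraph (n : ℕ) : (pathGraph n).IsAcyclic := by
  have key : ∀ i j : Fin n, i.val + 1 = j.val →
      ¬ ((pathGraph n).deleteEdges {s(i, j)}).Reachable i j := by
    rintro i j hij ⟨p⟩
    obtain ⟨d, -, hd₁, hd₂⟩ := p.exists_boundary_dart {k | k ≤ i} (le_refl i)
      (show ¬ j ≤ i by rw [Fin.le_def]; omega)
    have hadj := d.adj
    simp only [deleteEdges_adj, pathGraph_adj, Set.mem_singleton_iff] at hadj
    simp only [Set.mem_ofPred_eq, Fin.le_def, not_le] at hd₁ hd₂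
    have h₁ : d.fst = i := Fin.ext (by omega)
    have h₂ : d.snd = j := Fin.ext (by omega)
    exact hadj.2 (by rw [h₁, h₂])
  rw [isAcyclic_iff_forall_adj_isBridge]
  intro i j hij
  rw [isBridge_iff]
  rcases pathGraph_adj.mp hij with h | h
  · exact key i j h
  · rw [Sym2.eq_swap, reachable_comm]
    exact key j i h

def pathGraphEdgeColoring (n : ℕ) : Sym2 (Fin n) → Fin 2 :=
  Sym2.lift ⟨fun i j => ⟨min i.val j.val % 2, Nat.mod_lt _ two_pos⟩, fun i j => by
    simp only [min_comm]⟩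

lemma isAcyclicEdgeColoring_pathGraphEdgeColoring (n : ℕ) :
    IsAcyclicEdgeColoring (pathGraph n) (pathGraphEdgeColoring n) := by
  refine IsProperEdgeColoring.isAcyclicEdgeColoring ?_ (isAcyclic_pathGraph n)
  rintro e₁ h₁ e₂ h₂ hne ⟨k, hk₁, hk₂⟩
  obtain ⟨j₁, rfl⟩ := Sym2.mem_iff_exists.mp hk₁
  obtain ⟨j₂, rfl⟩ := Sym2.mem_iff_exists.mp hk₂
  have hj : j₁.val ≠ j₂.val := fun h => hne (by rw [Fin.ext h])
  rw [mem_edgeSet, pathGraph_adj] at h₁ h₂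
  simp only [pathGraphEdgeColoring, Sym2.lift_mk, ne_eq, Fin.mk.injEq]
  omega

namespace SimpleGraph.Walk
variable {α β : Type*} {G : SimpleGraph α} {H : SimpleGraph β} {x y : α × β}

section Left
variable [DecidableEq β] [DecidableRel G.Adj]

lemma edges_ofBoxProdLeft_cons {u v : α × β} (h : (G □ H).Adj u v) (w : (G □ H).Walk v y) :
    (cons h w).ofBoxProdLeft.edges =
      if u.2 = v.2 then s(u.1, v.1) :: w.ofBoxProdLeft.edges else w.ofBoxProdLeft.edges := by
  rcases h with ⟨hG, hs⟩ | ⟨hH, hs⟩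
  · simp [ofBoxProdLeft, Or.by_cases, hG, hs]
  · obtain ⟨a, k⟩ := u
    obtain ⟨b, k'⟩ := v
    dsimp only at hs hH ⊢
    subst hs
    simp [ofBoxProdLeft, Or.by_cases, hH.ne]

lemma edges_ofBoxProdLeft (w : (G □ H).Walk x y) :
    w.ofBoxProdLeft.edges =
      (w.edges.filter fun e => (e.map Prod.snd).IsDiag).map (Sym2.map Prod.fst) := by
  induction w with
  | nil => simp [ofBoxProdLeft]
  | cons h w ih =>
    rw [edges_ofBoxProdLeft_cons, ih, edges_cons, filter_cons]
    split_ifs <;> simp_all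

lemma edges_eq_map_ofBoxProdLeft (w : (G □ H).Walk x y)
    (hw : ∀ e ∈ w.edges, (e.map Prod.snd).IsDiag) :
    w.edges = w.ofBoxProdLeft.edges.map (Sym2.map (·, x.2)) := by
  induction w with
  | nil => simp [ofBoxProdLeft]
  | @cons u v _ h w ih =>
    simp only [edges_cons, forall_mem_cons, Sym2.map_mk, Sym2.mk_isDiag_iff] at hw
    rw [edges_ofBoxProdLeft_cons, if_pos hw.1, edges_cons, ih hw.2]
    simp [Prod.ext_iff, hw.1]

end Left

section Right
variable [DecidableEq α] [DecidableRel H.Adj]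

lemma edges_ofBoxProdRight_cons {u v : α × β} (h : (G □ H).Adj u v) (w : (G □ H).Walk v y) :
    (cons h w).ofBoxProdRight.edges =
      if u.1 = v.1 then s(u.2, v.2) :: w.ofBoxProdRight.edges else w.ofBoxProdRight.edges := by
  rcases h with ⟨hG, hs⟩ | ⟨hH, hs⟩
  · obtain ⟨a, k⟩ := u
    obtain ⟨b, k'⟩ := v
    dsimp only at hs hG ⊢
    subst hs
    simp [ofBoxProdRight, Or.by_cases, hG.ne]
  · simp [ofBoxProdRight, Or.by_cases, hH, hs]

lemma edges_eq_map_ofBoxProdRight (w : (G □ H).Walk x y)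
    (hw : ∀ e ∈ w.edges, ¬ (e.map Prod.snd).IsDiag) :
    w.edges = w.ofBoxProdRight.edges.map (Sym2.map (x.1, ·)) := by
  induction w with
  | nil => simp [ofBoxProdRight]
  | @cons u v _ h w ih =>
    simp only [edges_cons, forall_mem_cons, Sym2.map_mk, Sym2.mk_isDiag_iff] at hw
    have hs : u.1 = v.1 := (boxProd_adj.mp h).resolve_left (fun h' => hw.1 h'.2) |>.2
    rw [edges_ofBoxProdRight_cons, if_pos hs, edges_cons, ih hw.2]
    simp [Prod.ext_iff, hs]

end Right

end SimpleGraph.Walk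

section BoxProd
variable {α β A T : Type*} [AddGroup A] [DecidableEq β] {G : SimpleGraph α} {H : SimpleGraph β}
  (c : Sym2 α → A) (d : Sym2 β → T) (σ : β → A)

def boxProdEdgeColoring : Sym2 (α × β) → A ⊕ T :=
  Sym2.lift ⟨fun u v => if u.2 = v.2 then .inl (c s(u.1, v.1) + σ u.2) else .inr (d s(u.2, v.2)),
    fun u v => by by_cases h : u.2 = v.2 <;> simp [h, eq_comm, Sym2.eq_swap]⟩

lemma boxProdEdgeColoring_mk (u v : α × β) :
    boxProdEdgeColoring c d σ s(u, v) =
      if u.2 = v.2 then .inl (c s(u.1, v.1) + σ u.2) else .inr (d s(u.2, v.2)) :=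
  rfl

@[simp]
lemma boxProdEdgeColoring_map_left (e : Sym2 α) (k : β) :
    boxProdEdgeColoring c d σ (e.map (·, k)) = .inl (c e + σ k) := by
  induction e using Sym2.ind
  simp [boxProdEdgeColoring_mk]

@[simp]
lemma boxProdEdgeColoring_map_right {e : Sym2 β} (he : ¬ e.IsDiag) (a : α) :
    boxProdEdgeColoring c d σ (e.map (a, ·)) = .inr (d e) := by
  induction e using Sym2.ind
  simp_all [boxProdEdgeColoring_mk]

lemma exists_boxProdEdgeColoring_eq_inl {e : Sym2 (α × β)} (he : (e.map Prod.snd).IsDiag) :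
    ∃ k, boxProdEdgeColoring c d σ e = .inl (c (e.map Prod.fst) + σ k) := by
  induction e using Sym2.ind
  simp_all [boxProdEdgeColoring_mk]

lemma boxProdEdgeColoring_eq_inr {e : Sym2 (α × β)} (he : ¬ (e.map Prod.snd).IsDiag) :
    boxProdEdgeColoring c d σ e = .inr (d (e.map Prod.snd)) := by
  induction e using Sym2.ind
  simp_all [boxProdEdgeColoring_mk]

variable {c d}

lemma IsProperEdgeColoring.boxProd (hc : IsProperEdgeColoring G c)
    (hd : IsProperEdgeColoring H d) : IsProperEdgeColoring (G □ H) (boxProdEdgeColoring c d σ) := by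
  rintro e₁ h₁ e₂ h₂ hne ⟨z, hz₁, hz₂⟩
  obtain ⟨y₁, rfl⟩ := Sym2.mem_iff_exists.mp hz₁
  obtain ⟨y₂, rfl⟩ := Sym2.mem_iff_exists.mp hz₂
  have hy : y₁ ≠ y₂ := by rintro rfl; exact hne rfl
  rw [mem_edgeSet, boxProd_adj] at h₁ h₂
  rw [boxProdEdgeColoring_mk, boxProdEdgeColoring_mk]
  rcases h₁ with ⟨a₁, b₁⟩ | ⟨a₁, b₁⟩ <;> rcases h₂ with ⟨a₂, b₂⟩ | ⟨a₂, b₂⟩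
  · have : y₁.1 ≠ y₂.1 := fun h => hy (Prod.ext h (b₁.symm.trans b₂))
    simpa [← b₁, ← b₂] using hc _ a₁ _ a₂ (fun h => this (Sym2.congr_right.mp h))
      ⟨z.1, Sym2.mem_mk_left _ _, Sym2.mem_mk_left _ _⟩
  · simp [← b₁, a₂.ne]
  · simp [← b₂, a₁.ne]
  · have : y₁.2 ≠ y₂.2 := fun h => hy (Prod.ext (b₁.symm.trans b₂) h)
    simpa [a₁.ne, a₂.ne] using hd _ a₁ _ a₂ (fun h => this (Sym2.congr_right.mp h))
      ⟨z.2, Sym2.mem_mk_left _ _, Sym2.mem_mk_left _ _⟩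

lemma isChain_ne_edges_ofBoxProdLeft [DecidableRel G.Adj] (hσ : ∀ ⦃k k'⦄, H.Adj k k' → σ k ≠ σ k')
    {X : A} {Y : T} :
    ∀ {x y : α × β} (w : (G □ H).Walk x y),
      (∀ e ∈ w.edges, boxProdEdgeColoring c d σ e = .inl X ∨
        boxProdEdgeColoring c d σ e = .inr Y) →
      IsChain (fun e e' => boxProdEdgeColoring c d σ e ≠ boxProdEdgeColoring c d σ e') w.edges →
      IsChain (· ≠ ·) w.ofBoxProdLeft.edges ∧
        ∀ e ∈ w.ofBoxProdLeft.edges.head?,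
          (c e + σ x.2 = X ↔ ∃ e₀ ∈ w.edges.head?, boxProdEdgeColoring c d σ e₀ = .inl X) := by
  intro x y w
  induction w with
  | nil => simp [Walk.ofBoxProdLeft]
  | @cons u v y h w ih =>
    intro hcol hch
    rw [Walk.edges_cons, forall_mem_cons] at hcol
    rw [Walk.edges_cons, isChain_cons] at hch
    obtain ⟨ihc, ihh⟩ := ih hcol.2 hch.2
    rw [Walk.edges_ofBoxProdLeft_cons]
    by_cases hs : u.2 = v.2
    · have hX : c s(u.1, v.1) + σ u.2 = X := by
        simpa [boxProdEdgeColoring_mk, hs] using hcol.1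
      rw [if_pos hs]
      refine ⟨isChain_cons.mpr ⟨fun e he heq => ?_, ihc⟩, by simp [boxProdEdgeColoring_mk, hs]⟩
      -- `w` starts with a vertical edge, so `e` lies in a layer with the other shift
      subst heq
      obtain ⟨e₀, he₀, hfe₀⟩ := (ihh _ he).mp (by rwa [← hs])
      exact hch.1 e₀ he₀ (by rw [hfe₀, boxProdEdgeColoring_mk, if_pos hs, hX])
    · have hH : H.Adj u.2 v.2 := ((boxProd_adj.mp h).resolve_left fun h' => hs h'.2).1
      have hY : d s(u.2, v.2) = Y := by simpa [boxProdEdgeColoring_mk, hs] using hcol.1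
      rw [if_neg hs]
      refine ⟨ihc, fun e he => ?_⟩
      have hw₀ : w.edges ≠ [] := by
        intro h0
        rw [Walk.edges_ofBoxProdLeft, h0] at he
        simp at he
      have he₀ : w.edges.head hw₀ ∈ w.edges.head? := by simp [head?_eq_some_head hw₀]
      have hX : boxProdEdgeColoring c d σ (w.edges.head hw₀) = .inl X := by
        refine (hcol.2 _ (head_mem hw₀)).resolve_right fun h' => hch.1 _ he₀ ?_
        rw [h', boxProdEdgeColoring_mk, if_neg hs, hY]
      have hv : c e + σ v.2 = X := (ihh e he).mpr ⟨_, he₀, hX⟩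
      rw [Walk.edges_cons]
      simp only [head?_cons, Option.mem_def, Option.some.injEq, exists_eq_left',
        boxProdEdgeColoring_mk, if_neg hs, reduceCtorEq, iff_false]
      intro hu
      exact hσ hH (add_left_cancel (hu.trans hv.symm))

variable {x : α × β}

lemma IsAcyclicEdgeColoring.exists_three_of_forall_horizontal (hc : IsAcyclicEdgeColoring G c)
    (w : (G □ H).Walk x x) (hne : ¬ w.Nil) (hw : IsChain (· ≠ ·) w.edges)
    (hH : ∀ e ∈ w.edges, (e.map Prod.snd).IsDiag) :
    ∃ e₁ ∈ w.edges, ∃ e₂ ∈ w.edges, ∃ e₃ ∈ w.edges,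
      boxProdEdgeColoring c d σ e₁ ≠ boxProdEdgeColoring c d σ e₂ ∧
      boxProdEdgeColoring c d σ e₁ ≠ boxProdEdgeColoring c d σ e₃ ∧
      boxProdEdgeColoring c d σ e₂ ≠ boxProdEdgeColoring c d σ e₃ := by
  classical
  have hq := Walk.edges_eq_map_ofBoxProdLeft w hH
  rw [← Walk.edges_eq_nil, hq, map_eq_nil_iff, Walk.edges_eq_nil] at hne
  rw [hq, isChain_map] at hw
  obtain ⟨e₁, h₁, e₂, h₂, e₃, h₃, h12, h13, h23⟩ :=
    hc.exists_three_of_isChain _ hne (hw.imp fun _ _ h h' => h (h' ▸ rfl))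
  rw [hq]
  exact ⟨_, mem_map_of_mem h₁, _, mem_map_of_mem h₂, _, mem_map_of_mem h₃,
    by simpa using h12, by simpa using h13, by simpa using h23⟩

lemma IsAcyclicEdgeColoring.exists_three_of_forall_vertical (hd : IsAcyclicEdgeColoring H d)
    (w : (G □ H).Walk x x) (hne : ¬ w.Nil) (hw : IsChain (· ≠ ·) w.edges)
    (hV : ∀ e ∈ w.edges, ¬ (e.map Prod.snd).IsDiag) :
    ∃ e₁ ∈ w.edges, ∃ e₂ ∈ w.edges, ∃ e₃ ∈ w.edges,
      boxProdEdgeColoring c d σ e₁ ≠ boxProdEdgeColoring c d σ e₂ ∧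
      boxProdEdgeColoring c d σ e₁ ≠ boxProdEdgeColoring c d σ e₃ ∧
      boxProdEdgeColoring c d σ e₂ ≠ boxProdEdgeColoring c d σ e₃ := by
  classical
  have hq := Walk.edges_eq_map_ofBoxProdRight w hV
  rw [← Walk.edges_eq_nil, hq, map_eq_nil_iff, Walk.edges_eq_nil] at hne
  rw [hq, isChain_map] at hw
  obtain ⟨e₁, h₁, e₂, h₂, e₃, h₃, h12, h13, h23⟩ :=
    hd.exists_three_of_isChain _ hne (hw.imp fun _ _ h h' => h (h' ▸ rfl))
  have hcol : ∀ e ∈ w.ofBoxProdRight.edges,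
      boxProdEdgeColoring c d σ (e.map (x.1, ·)) = .inr (d e) := fun e he =>
    boxProdEdgeColoring_map_right c d σ
      (H.not_isDiag_of_mem_edgeSet (Walk.edges_subset_edgeSet _ he)) _
  rw [hq]
  exact ⟨_, mem_map_of_mem h₁, _, mem_map_of_mem h₂, _, mem_map_of_mem h₃,
    by simpa [hcol _ h₁, hcol _ h₂] using h12, by simpa [hcol _ h₁, hcol _ h₃] using h13,
    by simpa [hcol _ h₂, hcol _ h₃] using h23⟩

lemma IsAcyclicEdgeColoring.exists_three_of_horizontal_of_vertical (hc : IsAcyclicEdgeColoring G c)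
    (hd : IsProperEdgeColoring H d) (hσ : ∀ ⦃k k'⦄, H.Adj k k' → σ k ≠ σ k') {s₀ s₁ : A}
    (hσ₂ : ∀ k, σ k = s₀ ∨ σ k = s₁) (w : (G □ H).Walk x x) (hw : IsChain (· ≠ ·) w.edges)
    {e₁ e₂ : Sym2 (α × β)} (h₁ : e₁ ∈ w.edges) (hv₁ : ¬ (e₁.map Prod.snd).IsDiag)
    (h₂ : e₂ ∈ w.edges) (hh₂ : (e₂.map Prod.snd).IsDiag) :
    ∃ e₁ ∈ w.edges, ∃ e₂ ∈ w.edges, ∃ e₃ ∈ w.edges,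
      boxProdEdgeColoring c d σ e₁ ≠ boxProdEdgeColoring c d σ e₂ ∧
      boxProdEdgeColoring c d σ e₁ ≠ boxProdEdgeColoring c d σ e₃ ∧
      boxProdEdgeColoring c d σ e₂ ≠ boxProdEdgeColoring c d σ e₃ := by
  classical
  by_contra h
  obtain ⟨k, hX⟩ := exists_boxProdEdgeColoring_eq_inl c d σ hh₂
  have hY := boxProdEdgeColoring_eq_inr c d σ hv₁
  set X := c (e₂.map Prod.fst) + σ k
  set Y := d (e₁.map Prod.snd)
  have hcol : ∀ e ∈ w.edges,
      boxProdEdgeColoring c d σ e = .inl X ∨ boxProdEdgeColoring c d σ e = .inr Y := by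
    intro e he
    by_contra! hne
    exact h ⟨e₂, h₂, e₁, h₁, e, he, by simp [hX, hY], hX ▸ hne.1.symm, hY ▸ hne.2.symm⟩
  have hq := (isChain_ne_edges_ofBoxProdLeft σ hσ w hcol
    ((hc.1.boxProd σ hd).isChain_ne w hw)).1
  have hqcol : ∀ e ∈ w.ofBoxProdLeft.edges, c e = X - s₀ ∨ c e = X - s₁ := by
    intro e he
    rw [Walk.edges_ofBoxProdLeft] at he
    obtain ⟨e', he', rfl⟩ := mem_map.mp he
    rw [mem_filter, decide_eq_true_iff] at he'
    obtain ⟨k', hk'⟩ := exists_boxProdEdgeColoring_eq_inl c d σ he'.2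
    have hk'X : c (e'.map Prod.fst) + σ k' = X := by simpa [hk'] using hcol e' he'.1
    rcases hσ₂ k' with hs | hs
    · exact .inl (eq_sub_of_add_eq (hs ▸ hk'X))
    · exact .inr (eq_sub_of_add_eq (hs ▸ hk'X))
  have hqne : ¬ w.ofBoxProdLeft.Nil := by
    rw [← Walk.edges_eq_nil, Walk.edges_ofBoxProdLeft]
    exact ne_nil_of_mem (mem_map_of_mem (mem_filter.mpr ⟨h₂, by simpa using hh₂⟩))
  obtain ⟨a₁, ha₁, a₂, ha₂, a₃, ha₃, h12, h13, h23⟩ := hc.exists_three_of_isChain _ hqne hq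
  rcases hqcol a₁ ha₁ with r₁ | r₁ <;> rcases hqcol a₂ ha₂ with r₂ | r₂ <;>
    rcases hqcol a₃ ha₃ with r₃ | r₃ <;>
    first
      | exact h12 (r₁.trans r₂.symm)
      | exact h13 (r₁.trans r₃.symm)
      | exact h23 (r₂.trans r₃.symm)

theorem IsAcyclicEdgeColoring.boxProd (hc : IsAcyclicEdgeColoring G c)
    (hd : IsAcyclicEdgeColoring H d) (hσ : ∀ ⦃k k'⦄, H.Adj k k' → σ k ≠ σ k') {s₀ s₁ : A}
    (hσ₂ : ∀ k, σ k = s₀ ∨ σ k = s₁) :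
    IsAcyclicEdgeColoring (G □ H) (boxProdEdgeColoring c d σ) := by
  refine ⟨hc.1.boxProd σ hd.1, fun x w hw => ?_⟩
  have hne := hw.not_nil
  have hch : IsChain (· ≠ ·) w.edges := hw.edges_nodup.isChain
  by_cases hH : ∀ e ∈ w.edges, (e.map Prod.snd).IsDiag
  · exact hc.exists_three_of_forall_horizontal σ w hne hch hH
  by_cases hV : ∀ e ∈ w.edges, ¬ (e.map Prod.snd).IsDiag
  · exact hd.exists_three_of_forall_vertical σ w hne hch hV
  push Not at hH hV
  obtain ⟨e₁, h₁, hv₁⟩ := hH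
  obtain ⟨e₂, h₂, hh₂⟩ := hV
  exact hc.exists_three_of_horizontal_of_vertical σ hd.1 hσ hσ₂ w hch h₁ hv₁ h₂ hh₂

end BoxProd

theorem acyclicChromaticIndex_boxProd_pathGraph_general {α : Type*}
    (G : SimpleGraph α) (η : ℕ) (hη : acyclicChromaticIndex G = η) (h2 : 2 ≤ η)
    (l : ℕ) :
    acyclicChromaticIndex (G □ pathGraph l) ≤ η + 2 := by
  obtain ⟨c, hc⟩ := exists_isAcyclicEdgeColoring_of_acyclicChromaticIndex_eq hη (by omega)
  have : NeZero η := ⟨by omega⟩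
  have h01 : (0 : Fin η) ≠ 1 := by
    simp [Fin.ext_iff, Nat.mod_eq_of_lt (show 1 < η by omega)]
  let σ : Fin l → Fin η := fun k => if k.val % 2 = 0 then 0 else 1
  have hσ : ∀ ⦃i j⦄, (pathGraph l).Adj i j → σ i ≠ σ j := by
    intro i j hij
    have := pathGraph_adj.mp hij
    simp only [σ]
    split_ifs <;> first | exact h01 | exact h01.symm | omega
  have hσ₂ : ∀ k, σ k = 0 ∨ σ k = 1 := fun k => by
    simp only [σ]
    split_ifs <;> simp
  have hprod := hc.boxProd σ (isAcyclicEdgeColoring_pathGraphEdgeColoring l) hσ hσ₂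
  exact (hprod.comp finSumFinEquiv.injective).acyclicChromaticIndex_le

/-- if a'(G) = η ≥ 2 and l ≥ 3 then a'(G □ P_l) ≤ η + 2. -/
theorem acyclicChromaticIndex_boxProd_pathGraph {α : Type*}
    (G : SimpleGraph α) (η : ℕ) (hη : acyclicChromaticIndex G = η) (h2 : 2 ≤ η)
    (l : ℕ) (hl : 3 ≤ l) :
    acyclicChromaticIndex (G □ pathGraph l) ≤ η + 2 :=
  acyclicChromaticIndex_boxProd_pathGraph_general G η hη h2 l
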